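/- arXiv:1110.0031 — 3 statements merged into one kernel-verified Lean document; each statement's English description precedes it below -/
import Mathlib

section
/- Let G: Ω × Ω → ℝ be symmetric and satisfy the nonnegativity property ∫_Ω∫_Ω G(x,y) f(x) f(y) dx dy ≥ 0 for all bounded measurable f. Then for all measurable E, F ⊆ Ω, NL(F) − NL(E) ≤ 2∫_Ω∫_Ω |G(x,y)| χ_F(x) |χ_F(y) − χ_E(y)| dx dy, where NL(E) = ∫_Ω∫_Ω G(x,y) χ_E(x) χ_E(y) dx dy. -/
open MeasureTheory Metric

noncomputable def NL {n : ℕ} (Ω : Set (EuclideanSpace ℝ (Fin n)))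
    (G : EuclideanSpace ℝ (Fin n) → EuclideanSpace ℝ (Fin n) → ℝ)
    (E : Set (EuclideanSpace ℝ (Fin n))) : ℝ :=
  ∫ x in Ω, ∫ y in Ω, G x y * E.indicator 1 x * E.indicator 1 y

theorem NL_difference_estimate {n : ℕ} (Ω : Set (EuclideanSpace ℝ (Fin n)))
    (hΩ : MeasurableSet Ω) (hΩb : Bornology.IsBounded Ω)
    (G : EuclideanSpace ℝ (Fin n) → EuclideanSpace ℝ (Fin n) → ℝ)
    (hGmeas : Measurable (Function.uncurry G))
    (hGsym : ∀ x y, G x y = G y x)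
    (hGint : IntegrableOn (Function.uncurry G) (Ω ×ˢ Ω) (volume.prod volume))
    (hGpos : ∀ f : EuclideanSpace ℝ (Fin n) → ℝ, Measurable f →
      (∃ C : ℝ, ∀ x, |f x| ≤ C) →
      0 ≤ ∫ x in Ω, ∫ y in Ω, G x y * f x * f y)
    (E F : Set (EuclideanSpace ℝ (Fin n)))
    (hE : MeasurableSet E) (hF : MeasurableSet F)
    (hEΩ : E ⊆ Ω) (hFΩ : F ⊆ Ω) :
    NL Ω G F - NL Ω G E ≤
      2 * ∫ x in Ω, ∫ y in Ω,
            |G x y| * F.indicator 1 x * |F.indicator 1 y - E.indicator 1 y| := by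
  classical
  set μ := volume.restrict Ω with hμ
  set χE : EuclideanSpace ℝ (Fin n) → ℝ := E.indicator 1 with hχE
  set χF : EuclideanSpace ℝ (Fin n) → ℝ := F.indicator 1 with hχF
  set f : EuclideanSpace ℝ (Fin n) → ℝ := fun x => χF x - χE x with hfdef
  have hmE : Measurable χE := measurable_one.indicator hE
  have hmF : Measurable χF := measurable_one.indicator hF
  have hmf : Measurable f := hmF.sub hmE
  have hbE : ∀ x, |χE x| ≤ 1 := by
    intro x; by_cases h : x ∈ E <;> simp [hχE, Set.indicator_apply, h]
  have hbF : ∀ x, |χF x| ≤ 1 := by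
    intro x; by_cases h : x ∈ F <;> simp [hχF, Set.indicator_apply, h]
  have hbf : ∀ x, |f x| ≤ 2 := by
    intro x
    have h := abs_sub (χF x) (χE x)
    simp only [hfdef]
    calc |χF x - χE x| ≤ |χF x| + |χE x| := abs_sub _ _
      _ ≤ 2 := by linarith [hbE x, hbF x]
  have hFnonneg : ∀ x, 0 ≤ χF x := by
    intro x; by_cases h : x ∈ F <;> simp [hχF, Set.indicator_apply, h]
  have hG' : Integrable
      (fun p : EuclideanSpace ℝ (Fin n) × EuclideanSpace ℝ (Fin n) => G p.1 p.2)
      (μ.prod μ) := by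
    rw [hμ, Measure.prod_restrict]
    exact hGint
  -- general integrability lemma
  have key : ∀ (a b : EuclideanSpace ℝ (Fin n) → ℝ), Measurable a → Measurable b →
      (∀ x, |a x| ≤ 2) → (∀ x, |b x| ≤ 2) →
      Integrable (fun p : EuclideanSpace ℝ (Fin n) × EuclideanSpace ℝ (Fin n) =>
        G p.1 p.2 * a p.1 * b p.2) (μ.prod μ) := by
    intro a b ha hb hba hbb
    have hmeas : Measurable (fun p : EuclideanSpace ℝ (Fin n) × EuclideanSpace ℝ (Fin n) =>
        G p.1 p.2 * a p.1 * b p.2) :=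
      (hGmeas.mul (ha.comp measurable_fst)).mul (hb.comp measurable_snd)
    refine Integrable.mono ((hG'.const_mul 4)) hmeas.aestronglyMeasurable ?_
    refine Filter.Eventually.of_forall fun p => ?_
    have h1 : |a p.1| ≤ 2 := hba p.1
    have h2 : |b p.2| ≤ 2 := hbb p.2
    have hG0 : (0:ℝ) ≤ |G p.1 p.2| := abs_nonneg _
    simp only [Real.norm_eq_abs]
    rw [abs_mul, abs_mul, abs_mul]
    have h4 : |(4:ℝ)| = 4 := by norm_num
    rw [h4]
    have hle : |G p.1 p.2| * |a p.1| * |b p.2| ≤ |G p.1 p.2| * 2 * 2 :=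
      mul_le_mul (mul_le_mul_of_nonneg_left h1 hG0) h2 (abs_nonneg _)
        (by positivity)
    linarith
  have kEE := key χE χE hmE hmE (fun x => (hbE x).trans one_le_two)
    (fun x => (hbE x).trans one_le_two)
  have kFF := key χF χF hmF hmF (fun x => (hbF x).trans one_le_two)
    (fun x => (hbF x).trans one_le_two)
  have kFE := key χF χE hmF hmE (fun x => (hbF x).trans one_le_two)
    (fun x => (hbE x).trans one_le_two)
  have kEF := key χE χF hmE hmF (fun x => (hbE x).trans one_le_two)
    (fun x => (hbF x).trans one_le_two)
  have kFf := key χF f hmF hmf (fun x => (hbF x).trans one_le_two) hbf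
  have kff := key f f hmf hmf hbf hbf
  -- abbreviation for bilinear integrals
  set P : (EuclideanSpace ℝ (Fin n) → ℝ) → (EuclideanSpace ℝ (Fin n) → ℝ) → ℝ :=
    fun a b => ∫ p : EuclideanSpace ℝ (Fin n) × EuclideanSpace ℝ (Fin n),
      G p.1 p.2 * a p.1 * b p.2 ∂(μ.prod μ) with hP
  -- iterated integrals equal product integrals
  have iter : ∀ (a b : EuclideanSpace ℝ (Fin n) → ℝ),
      Integrable (fun p : EuclideanSpace ℝ (Fin n) × EuclideanSpace ℝ (Fin n) =>
        G p.1 p.2 * a p.1 * b p.2) (μ.prod μ) →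
      (∫ x in Ω, ∫ y in Ω, G x y * a x * b y) = P a b := by
    intro a b hab
    exact MeasureTheory.integral_integral (f := fun x y => G x y * a x * b y) hab
  -- swap identity
  have hswap : P χE χF = P χF χE := by
    have := MeasureTheory.integral_prod_swap (μ := μ) (ν := μ)
      (fun p : EuclideanSpace ℝ (Fin n) × EuclideanSpace ℝ (Fin n) =>
        G p.1 p.2 * χE p.1 * χF p.2)
    simp only [hP]
    rw [← this]
    congr 1
    ext p
    simp only [Prod.snd_swap, Prod.fst_swap]
    rw [hGsym p.1 p.2]
    ring
  -- NL as product integrals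
  have hNLF : NL Ω G F = P χF χF := iter χF χF kFF
  have hNLE : NL Ω G E = P χE χE := iter χE χE kEE
  -- bilinearity expansions
  have expand1 : P χF f = P χF χF - P χF χE := by
    have : (fun p : EuclideanSpace ℝ (Fin n) × EuclideanSpace ℝ (Fin n) =>
        G p.1 p.2 * χF p.1 * f p.2)
        = fun p => G p.1 p.2 * χF p.1 * χF p.2 - G p.1 p.2 * χF p.1 * χE p.2 := by
      ext p; simp only [hfdef]; ring
    simp only [hP]
    rw [this, integral_sub kFF kFE]
  have expand2 : P f f = P χF f - P χE f := by
    have : (fun p : EuclideanSpace ℝ (Fin n) × EuclideanSpace ℝ (Fin n) =>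
        G p.1 p.2 * f p.1 * f p.2)
        = fun p => G p.1 p.2 * χF p.1 * f p.2 - G p.1 p.2 * χE p.1 * f p.2 := by
      ext p; simp only [hfdef]; ring
    simp only [hP]
    rw [this, integral_sub kFf (key χE f hmE hmf (fun x => (hbE x).trans one_le_two) hbf)]
  have expand3 : P χE f = P χE χF - P χE χE := by
    have : (fun p : EuclideanSpace ℝ (Fin n) × EuclideanSpace ℝ (Fin n) =>
        G p.1 p.2 * χE p.1 * f p.2)
        = fun p => G p.1 p.2 * χE p.1 * χF p.2 - G p.1 p.2 * χE p.1 * χE p.2 := by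
      ext p; simp only [hfdef]; ring
    simp only [hP]
    rw [this, integral_sub kEF kEE]
  -- positivity
  have hpos : 0 ≤ P f f := by
    have h := hGpos f hmf ⟨2, hbf⟩
    rwa [iter f f kff] at h
  -- key identity: P χF χF - P χE χE = 2 * P χF f - P f f
  have hident : P χF χF - P χE χE = 2 * P χF f - P f f := by
    rw [expand2, expand1, expand3, hswap]; ring
  -- the RHS integrand
  have hRHSint : Integrable (fun p : EuclideanSpace ℝ (Fin n) × EuclideanSpace ℝ (Fin n) =>
      |G p.1 p.2| * χF p.1 * |f p.2|) (μ.prod μ) := by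
    have hmeas : Measurable (fun p : EuclideanSpace ℝ (Fin n) × EuclideanSpace ℝ (Fin n) =>
        |G p.1 p.2| * χF p.1 * |f p.2|) :=
      (hGmeas.abs.mul (hmF.comp measurable_fst)).mul ((hmf.comp measurable_snd).abs)
    refine Integrable.mono (hG'.const_mul 4) hmeas.aestronglyMeasurable ?_
    refine Filter.Eventually.of_forall fun p => ?_
    simp only [Real.norm_eq_abs]
    rw [abs_mul, abs_mul, abs_abs, abs_abs, abs_mul]
    have h4 : |(4:ℝ)| = 4 := by norm_num
    rw [h4]
    have h1 : |χF p.1| ≤ 2 := (hbF p.1).trans one_le_two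
    have h2 : |f p.2| ≤ 2 := hbf p.2
    have hle : |G p.1 p.2| * |χF p.1| * |f p.2| ≤ |G p.1 p.2| * 2 * 2 :=
      mul_le_mul (mul_le_mul_of_nonneg_left h1 (abs_nonneg _)) h2 (abs_nonneg _)
        (by positivity)
    linarith
  have hRHS : (∫ x in Ω, ∫ y in Ω, |G x y| * χF x * |f y|)
      = ∫ p : EuclideanSpace ℝ (Fin n) × EuclideanSpace ℝ (Fin n),
        |G p.1 p.2| * χF p.1 * |f p.2| ∂(μ.prod μ) :=
    MeasureTheory.integral_integral (f := fun x y => |G x y| * χF x * |f y|) hRHSint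
  -- pointwise bound
  have hmono : P χF f ≤ ∫ p : EuclideanSpace ℝ (Fin n) × EuclideanSpace ℝ (Fin n),
      |G p.1 p.2| * χF p.1 * |f p.2| ∂(μ.prod μ) := by
    refine integral_mono kFf hRHSint fun p => ?_
    have h1 : G p.1 p.2 * χF p.1 * f p.2 ≤ |G p.1 p.2 * χF p.1 * f p.2| := le_abs_self _
    calc G p.1 p.2 * χF p.1 * f p.2 ≤ |G p.1 p.2 * χF p.1 * f p.2| := le_abs_self _
      _ = |G p.1 p.2| * χF p.1 * |f p.2| := by
          rw [abs_mul, abs_mul, abs_of_nonneg (hFnonneg p.1)]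
  -- conclude
  rw [hNLF, hNLE, hident]
  have : (∫ x in Ω, ∫ y in Ω, |G x y| * F.indicator 1 x * |F.indicator 1 y - E.indicator 1 y|)
      = ∫ x in Ω, ∫ y in Ω, |G x y| * χF x * |f y| := rfl
  rw [this, hRHS]
  linarith
end

section
/- For two balls of the same radius r in ℝⁿ with centers p, q, the measure of their symmetric difference is controlled linearly by the distance of the centers: |B_r(p) △ B_r(q)| ≤ C(n) r^{n−1} |p − q| for a dimensional constant C(n). -/
open MeasureTheory Metric
open scoped symmDiff

lemma pow_sub_pow_le_aux (a b : ℝ) (hb : 0 ≤ b) (hab : b ≤ a) (n : ℕ) :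
    a ^ n - b ^ n ≤ n * a ^ (n - 1) * (a - b) := by
  rcases Nat.eq_zero_or_pos n with h | h
  · simp [h]
  rw [← geom_sum₂_mul]
  have key : ∀ i ∈ Finset.range n, a ^ i * b ^ (n - 1 - i) ≤ a ^ (n - 1) := by
    intro i hi
    simp only [Finset.mem_range] at hi
    calc a ^ i * b ^ (n - 1 - i) ≤ a ^ i * a ^ (n - 1 - i) :=
          mul_le_mul_of_nonneg_left (pow_le_pow_left₀ hb hab _)
            (pow_nonneg (hb.trans hab) i)
      _ = a ^ (n - 1) := by rw [← pow_add]; congr 1; omega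
  have h2 := Finset.sum_le_card_nsmul _ _ _ key
  simp only [Finset.card_range, nsmul_eq_mul] at h2
  have hab' : 0 ≤ a - b := sub_nonneg.2 hab
  nlinarith

/-- The symmetric difference of two balls of the same radius is controlled linearly by the
distance of the centers. -/
theorem symmDiff_balls_le (n : ℕ) (hn : 1 ≤ n) :
    ∃ C : ℝ, 0 < C ∧ ∀ (r : ℝ), 0 < r → ∀ p q : EuclideanSpace ℝ (Fin n),
      (volume (ball p r ∆ ball q r)).toReal ≤ C * r ^ (n - 1) * dist p q := by
  set E := EuclideanSpace ℝ (Fin n)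
  set B : ℝ := (volume (ball (0 : E) 1)).toReal with hB
  have hBpos : 0 < B := ENNReal.toReal_pos (measure_ball_pos volume _ one_pos).ne'
    (measure_ball_lt_top).ne
  have hfr : Module.finrank ℝ E = n := by
    simp [E, finrank_euclideanSpace]
  haveI : Nontrivial E := Module.nontrivial_of_finrank_pos (R := ℝ) (by rw [hfr]; omega)
  have hball : ∀ (x : E) (s : ℝ), 0 ≤ s → (volume (ball x s)).toReal = s ^ n * B := by
    intro x s hs
    rw [Measure.addHaar_ball volume x hs, ENNReal.toReal_mul,
      ENNReal.toReal_ofReal (pow_nonneg hs _), hfr]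
  refine ⟨(n * 2 ^ n + 2) * B, by positivity, ?_⟩
  intro r hr p q
  set d : ℝ := dist p q with hd
  have hd0 : 0 ≤ d := dist_nonneg
  rcases le_or_gt r d with hrd | hdr
  · -- d ≥ r : bound by the union of the two balls
    have hsub : ball p r ∆ ball q r ⊆ ball p r ∪ ball q r := by
      intro x hx
      rcases Set.mem_symmDiff.1 hx with ⟨h1, _⟩ | ⟨h1, _⟩
      exacts [Or.inl h1, Or.inr h1]
    have h1 : (volume (ball p r ∆ ball q r)).toReal ≤ (volume (ball p r ∪ ball q r)).toReal := by
      apply ENNReal.toReal_mono ?_ (measure_mono hsub)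
      exact ((measure_union_le _ _).trans_lt
        (ENNReal.add_lt_top.2 ⟨measure_ball_lt_top, measure_ball_lt_top⟩)).ne
    have h2 : (volume (ball p r ∪ ball q r)).toReal ≤ 2 * (r ^ n * B) := by
      have := measure_union_le (μ := volume) (ball p r) (ball q r)
      have h3 : (volume (ball p r ∪ ball q r)).toReal
          ≤ ((volume (ball p r)) + volume (ball q r)).toReal := by
        apply ENNReal.toReal_mono ?_ this
        exact (ENNReal.add_lt_top.2 ⟨measure_ball_lt_top, measure_ball_lt_top⟩).ne
      rw [ENNReal.toReal_add measure_ball_lt_top.ne measure_ball_lt_top.ne,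
        hball p r hr.le, hball q r hr.le] at h3
      linarith
    have hrn : r ^ n = r ^ (n - 1) * r := by
      rw [← pow_succ]; congr 1; omega
    calc (volume (ball p r ∆ ball q r)).toReal ≤ 2 * (r ^ n * B) := h1.trans h2
      _ = 2 * B * r ^ (n - 1) * r := by rw [hrn]; ring
      _ ≤ (n * 2 ^ n + 2) * B * r ^ (n - 1) * d := by
          have e1 : 2 * B * r ^ (n - 1) * r ≤ 2 * B * r ^ (n - 1) * d :=
            mul_le_mul_of_nonneg_left hrd (by positivity)
          have h4 : (0:ℝ) ≤ (n : ℝ) * 2 ^ n := by positivity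
          have h5 : (0:ℝ) ≤ r ^ (n - 1) := by positivity
          nlinarith [e1, mul_nonneg (mul_nonneg h4 hBpos.le) (mul_nonneg h5 hd0)]
  · -- d < r : symmetric difference lies inside the annulus ball p (r+d) \ ball p (r-d)
    have hsub : ball p r ∆ ball q r ⊆ ball p (r + d) \ ball p (r - d) := by
      intro x hx
      have htri1 : dist x p ≤ dist x q + d := by
        have h := dist_triangle x q p
        rw [dist_comm q p, ← hd] at h
        exact h
      have htri2 : dist x q ≤ dist x p + d := by
        have h := dist_triangle x p q
        rw [← hd] at h
        exact h
      rcases Set.mem_symmDiff.1 hx with ⟨h1, h2⟩ | ⟨h1, h2⟩ <;>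
        rw [mem_ball] at h1 <;> rw [mem_ball, not_lt] at h2 <;>
        refine ⟨mem_ball.2 ?_, fun hmem => absurd (mem_ball.1 hmem) (not_lt.2 ?_)⟩ <;>
        linarith
    have hmeas : (volume (ball p (r + d) \ ball p (r - d))).toReal
        = (r + d) ^ n * B - (r - d) ^ n * B := by
      rw [measure_diff (ball_subset_ball (by linarith)) measurableSet_ball.nullMeasurableSet
          measure_ball_lt_top.ne,
        ENNReal.toReal_sub_of_le (measure_mono (ball_subset_ball (by linarith)))
          measure_ball_lt_top.ne,
        hball p _ (by linarith), hball p _ (by linarith)]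
    have h1 : (volume (ball p r ∆ ball q r)).toReal
        ≤ (r + d) ^ n * B - (r - d) ^ n * B := by
      rw [← hmeas]
      exact ENNReal.toReal_mono (measure_mono (Set.diff_subset) |>.trans_lt
        measure_ball_lt_top).ne (measure_mono hsub)
    have h2 : (r + d) ^ n - (r - d) ^ n ≤ n * (r + d) ^ (n - 1) * (2 * d) := by
      have := pow_sub_pow_le_aux (r + d) (r - d) (by linarith) (by linarith) n
      linarith
    have h3 : (r + d) ^ (n - 1) ≤ 2 ^ (n - 1) * r ^ (n - 1) := by
      rw [← mul_pow]
      exact pow_le_pow_left₀ (by linarith) (by linarith) _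
    have h4 : (2:ℝ) ^ (n - 1) * 2 = 2 ^ n := by
      rw [← pow_succ]; congr 1; omega
    calc (volume (ball p r ∆ ball q r)).toReal
        ≤ (r + d) ^ n * B - (r - d) ^ n * B := h1
      _ = ((r + d) ^ n - (r - d) ^ n) * B := by ring
      _ ≤ (n * (r + d) ^ (n - 1) * (2 * d)) * B := by
          apply mul_le_mul_of_nonneg_right h2 hBpos.le
      _ ≤ (n * (2 ^ (n - 1) * r ^ (n - 1)) * (2 * d)) * B := by
          have hn0 : (0:ℝ) ≤ n := Nat.cast_nonneg n
          apply mul_le_mul_of_nonneg_right _ hBpos.le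
          apply mul_le_mul_of_nonneg_right _ (by linarith : (0:ℝ) ≤ 2 * d)
          exact mul_le_mul_of_nonneg_left h3 hn0
      _ = (n * 2 ^ n) * B * r ^ (n - 1) * d := by rw [← h4]; ring
      _ ≤ (n * 2 ^ n + 2) * B * r ^ (n - 1) * d := by
          have : (0:ℝ) ≤ B * r ^ (n - 1) * d := by positivity
          nlinarith
end

section
/- Half-space version of the reflection geometric lemma: Let H = {x ∈ ℝⁿ : x_n < 0} and let p ∈ ℝⁿ with |B_1(p) \ H| ≤ h for h sufficiently small. Then the distance β from p to the hyperplane complement, defined so that B_1(p − β e_n) ⊆ H with β minimal, satisfies β ≤ C(n) h^{2/(n+1)} for a dimensional constant C(n). Equivalently, there is v ∈ ℝⁿ with |v| ≤ C(n) h^{2/(n+1)} and B_1(p + v) ⊆ H. -/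
/-!
Let `β = pₙ + 1` be the height by which `B₁(p)` protrudes past `{xₙ = 0}`. For `0 < b ≤ 1` the
cap of height `b` contains the box `(pₙ + 1 - b, pₙ + 1 - b/2) × ∏ (pᵢ - s, pᵢ + s)` with
`n s² = b/2`, whose volume is `≍ b^{(n+1)/2}`. Taking `b = 1` shows that a small `h` forces
`β < 1`; taking `b = β` then gives `β ≲ h^{2/(n+1)}`, and the translate `B₁(p - β eₙ)` lies in `H`.
-/

open MeasureTheory Metric

namespace EuclideanSpace

variable {ι : Type*} [Fintype ι]

theorem ball_subset_setOf_apply_lt {p : EuclideanSpace ℝ ι} {r c : ℝ} {j : ι}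
    (h : p j + r ≤ c) : ball p r ⊆ {x | x j < c} := fun x hx => by
  have := (abs_lt.1 ((PiLp.dist_apply_le x p j).trans_lt hx)).2
  simp only [Set.mem_ofPred_eq]
  linarith

theorem volume_setOf_forall_mem (I : ι → Set ℝ) :
    volume {x : EuclideanSpace ℝ ι | ∀ i, x i ∈ I i} = ∏ i, volume (I i) := by
  rw [← volume_pi_pi, ← (volume_preserving_symm_measurableEquiv_toLp ι).measure_preimage_equiv]
  simp [Set.preimage, Set.pi]

end EuclideanSpace

theorem le_rpow_of_mul_sqrt_pow_le {b h K : ℝ} {m : ℕ} (hb : 0 ≤ b) (hK : 0 < K) (hm : m ≠ 0)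
    (hbh : K * √b ^ m ≤ h) : b ≤ (K ^ (2 / m : ℝ))⁻¹ * h ^ (2 / m : ℝ) := by
  have hpow : √b ^ m ≤ h / K := by rwa [le_div_iff₀' hK]
  calc b = (√b ^ m) ^ (2 / m : ℝ) := by
        rw [← Real.rpow_natCast, ← Real.rpow_mul (Real.sqrt_nonneg b),
          mul_div_cancel₀ _ (Nat.cast_ne_zero.2 hm), Real.rpow_two, Real.sq_sqrt hb]
    _ ≤ (h / K) ^ (2 / m : ℝ) := by gcongr
    _ = (K ^ (2 / m : ℝ))⁻¹ * h ^ (2 / m : ℝ) := by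
        rw [Real.div_rpow (le_trans (by positivity) hbh) hK.le, div_eq_inv_mul]

noncomputable def capConst (d : ℕ) : ℝ := √(2 / d) ^ (d - 1) / 2

theorem capConst_pos (d : ℕ) : 0 < capConst d := by
  rcases d.eq_zero_or_pos with rfl | hd
  · norm_num [capConst]
  · unfold capConst; positivity

noncomputable def capHalfWidth (d : ℕ) (b : ℝ) : ℝ := √b * √(2 / d) / 2

theorem card_mul_capHalfWidth_sq {d : ℕ} (hd : d ≠ 0) {b : ℝ} (hb : 0 ≤ b) :
    d * capHalfWidth d b ^ 2 = b / 2 := by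
  rw [capHalfWidth, div_pow, mul_pow, Real.sq_sqrt hb, Real.sq_sqrt (by positivity)]
  field_simp

section
variable {ι : Type*} [Fintype ι]

def ballCap (p : EuclideanSpace ℝ ι) (j : ι) (b : ℝ) : Set (EuclideanSpace ℝ ι) :=
  ball p 1 ∩ {x | p j + 1 - b ≤ x j}

variable [DecidableEq ι]

def capBox (p : EuclideanSpace ℝ ι) (j : ι) (b : ℝ) : Set (EuclideanSpace ℝ ι) :=
  {x | ∀ i, x i ∈ if i = j then Set.Ioo (p j + 1 - b) (p j + 1 - b / 2) else
    Set.Ioo (p i - capHalfWidth (Fintype.card ι) b) (p i + capHalfWidth (Fintype.card ι) b)}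

theorem volume_capBox (p : EuclideanSpace ℝ ι) (j : ι) {b : ℝ} (hb : 0 ≤ b) :
    volume (capBox p j b) =
      ENNReal.ofReal (capConst (Fintype.card ι) * √b ^ (Fintype.card ι + 1)) := by
  set d := Fintype.card ι
  have hd : 0 < d := Fintype.card_pos_iff.2 ⟨j⟩
  have hside : ∀ i ∈ ({j}ᶜ : Finset ι), volume (if i = j then Set.Ioo (p j + 1 - b) (p j + 1 - b / 2)
      else Set.Ioo (p i - capHalfWidth d b) (p i + capHalfWidth d b)) =
      ENNReal.ofReal (√b * √(2 / d)) := fun i hi => by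
    rw [if_neg (by simpa using hi), Real.volume_Ioo, capHalfWidth]
    ring_nf
  have hpow : √b ^ (d + 1) = b * √b ^ (d - 1) := by
    rw [show d + 1 = 2 + (d - 1) by omega, pow_add, Real.sq_sqrt hb]
  rw [capBox, EuclideanSpace.volume_setOf_forall_mem, Fintype.prod_eq_mul_prod_compl j,
    Finset.prod_congr rfl hside, if_pos rfl, Real.volume_Ioo, Finset.prod_const, Finset.card_compl,
    Finset.card_singleton, ← ENNReal.ofReal_pow (by positivity), ← ENNReal.ofReal_mul (by linarith),
    capConst, hpow, mul_pow]
  congr 1; ring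

theorem capBox_subset_ballCap (p : EuclideanSpace ℝ ι) (j : ι) {b : ℝ} (hb₀ : 0 ≤ b)
    (hb₁ : b ≤ 1) : capBox p j b ⊆ ballCap p j b := by
  set s := capHalfWidth (Fintype.card ι) b
  intro x hx
  have hxj : x j ∈ Set.Ioo (p j + 1 - b) (p j + 1 - b / 2) := by simpa using hx j
  have hcenter : dist (x j) (p j) ^ 2 < (1 - b / 2) ^ 2 := by
    rw [Real.dist_eq, sq_abs]
    nlinarith [hxj.1, hxj.2]
  have hside : ∀ i ∈ ({j}ᶜ : Finset ι), dist (x i) (p i) ^ 2 ≤ s ^ 2 := fun i hij => by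
    have hxi := hx i
    rw [if_neg (by simpa using hij)] at hxi
    rw [Real.dist_eq, sq_abs]
    nlinarith [hxi.1, hxi.2]
  have hsides : ∑ i ∈ ({j}ᶜ : Finset ι), dist (x i) (p i) ^ 2 ≤ b / 2 :=
    calc _ ≤ ∑ _i ∈ ({j}ᶜ : Finset ι), s ^ 2 := Finset.sum_le_sum hside
      _ ≤ Fintype.card ι * s ^ 2 := by
        rw [Finset.sum_const, nsmul_eq_mul]
        gcongr
        exact_mod_cast Finset.card_le_univ _
      _ = b / 2 := card_mul_capHalfWidth_sq (Fintype.card_pos_iff.2 ⟨j⟩).ne' hb₀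
  refine ⟨?_, hxj.1.le⟩
  rw [mem_ball, ← pow_lt_one_iff_of_nonneg dist_nonneg two_ne_zero, PiLp.dist_sq_eq_of_L2,
    Fintype.sum_eq_add_sum_compl j]
  nlinarith
end

/-- Half-space version of the geometric reflection lemma: a unit ball protruding from the
half-space `H = {xₙ < 0}` by a small volume `h` can be translated inside `H` by a vector of
length `≲ h^{2/(n+1)}`. -/
theorem ball_into_halfspace (n : ℕ) (hn : 1 ≤ n) :
    ∃ C : ℝ, 0 < C ∧ ∃ h₀ : ℝ, 0 < h₀ ∧
      ∀ h : ℝ, 0 < h → h ≤ h₀ →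
        ∀ p : EuclideanSpace ℝ (Fin n),
          volume (ball p 1 \ {x : EuclideanSpace ℝ (Fin n) | x ⟨n - 1, by omega⟩ < 0})
              ≤ ENNReal.ofReal h →
          ∃ v : EuclideanSpace ℝ (Fin n),
            ‖v‖ ≤ C * h ^ ((2 : ℝ) / (n + 1)) ∧
            ball (p + v) 1 ⊆ {x : EuclideanSpace ℝ (Fin n) | x ⟨n - 1, by omega⟩ < 0} := by
  set j : Fin n := ⟨n - 1, by omega⟩
  have hK := capConst_pos n
  refine ⟨(capConst n ^ ((2 : ℝ) / (n + 1)))⁻¹, by positivity, capConst n / 2, by positivity,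
    fun h hh hh₀ p hvol => ?_⟩
  have cap_le {b : ℝ} (hb₀ : 0 ≤ b) (hb₁ : b ≤ 1) (hbp : b ≤ p j + 1) :
      capConst n * √b ^ (n + 1) ≤ h := by
    have hsub : ballCap p j b ⊆ ball p 1 \ {x | x j < 0} :=
      fun x ⟨hxp, hxj⟩ => ⟨hxp, fun hneg : x j < 0 => by
        linarith [show p j + 1 - b ≤ x j from hxj]⟩
    have := (volume_capBox p j hb₀).symm.le.trans
      ((measure_mono ((capBox_subset_ballCap p j hb₀ hb₁).trans hsub)).trans hvol)
    rwa [Fintype.card_fin, ENNReal.ofReal_le_ofReal_iff hh.le] at this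
  rcases le_or_gt (p j + 1) 0 with hβ | hβ
  · exact ⟨0, by simp only [norm_zero]; positivity,
      by simpa using EuclideanSpace.ball_subset_setOf_apply_lt (by simpa using hβ)⟩
  have hβ₁ : p j + 1 < 1 := by
    by_contra! h₁
    have := cap_le zero_le_one le_rfl h₁
    simp only [Real.sqrt_one, one_pow, mul_one] at this
    linarith
  refine ⟨EuclideanSpace.single j (-(p j + 1)), ?_,
    EuclideanSpace.ball_subset_setOf_apply_lt (by simp)⟩
  rw [PiLp.norm_single, norm_neg, Real.norm_of_nonneg hβ.le]
  exact_mod_cast le_rpow_of_mul_sqrt_pow_le hβ.le hK n.succ_ne_zero (cap_le hβ.le hβ₁.le le_rfl)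
end
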